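/- arXiv:math/0307205 — 6 statements merged into one kernel-verified Lean document; each statement's English description precedes it below -/
import Mathlib

section
/- Let S be a commutative local Noetherian ring which is 2-adically complete, Henselian, and whose residue field is separably closed (i.e. S is strictly Henselian). Let n be a natural number, let M be a free S-module of rank 2n, and let b be a perfect, symmetric bilinear form on M whose reduction modulo 2 is alternating (i.e. b(x,x) ∈ 2S for all x ∈ M). Then there exists an S-basis e₁, f₁, …, eₙ, fₙ of M such that b(eᵢ,fᵢ) = b(fᵢ,eᵢ) = 1 for all i, b(eᵢ,eⱼ) = 0 and b(fᵢ,fⱼ) = 0 for all i, j, and b(eᵢ,fⱼ) = 0 whenever i ≠ j; in other words, the Gram matrix of b with respect to this basis is J(2n), the block-diagonal matrix with n diagonal blocks ((0,1),(1,0)). -/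
/-!
Since `S` is `2`-adically complete, `2` lies in the maximal ideal. Hence `X² + X + c` has a
separable reduction, and separable closedness of the residue field together with Hensel's lemma
give it a root in `S`. Solving such an equation corrects a vector `x` with `b x y = 1` to an
isotropic `e = x + β • y` with `b e y` a unit, and then `y` to an isotropic partner `f` with
`b e f = 1`. The hyperbolic plane spanned by `e, f` splits off orthogonally; its orthogonal
complement is a direct summand of a free module over a local ring, hence free of rank `2n - 2`,
and the restricted form is again perfect, symmetric and even, so induction on `n` concludes.
-/

open IsLocalRing Polynomial Module Submodule
open LinearMap (BilinForm)

section LocalRing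

variable {S : Type*} [CommRing S] [IsLocalRing S]

lemma isUnit_two_mul_add_one (h2 : (2 : S) ∈ maximalIdeal S) (y : S) : IsUnit (2 * y + 1) :=
  Ideal.mem_jacobson_bot.mp (by rwa [jacobson_eq_maximalIdeal ⊥ bot_ne_top]) y

end LocalRing

section Henselian

variable {S : Type*} [CommRing S] [HenselianLocalRing S] [IsSepClosed (ResidueField S)]

lemma exists_mul_self_add_self_add_eq_zero (h2 : (2 : S) ∈ maximalIdeal S) (c : S) :
    ∃ r : S, r * r + r + c = 0 := by
  have hp : (X ^ 2 + X + C c : S[X]).Monic := by monicity!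
  have hdeg : (X ^ 2 + X + C c : S[X]).degree = 2 := by compute_degree!
  have hderiv : derivative (X ^ 2 + X + C c : S[X]) = C 2 * X + 1 := by
    simp [one_add_one_eq_two]
  set p : S[X] := X ^ 2 + X + C c
  have hderiv_red : (C 2 * X + 1 : S[X]).map (residue S) = 1 := by
    simp [(residue_eq_zero_iff 2).mpr h2]
  have hsep : (p.map (residue S)).Separable := by
    rw [Polynomial.separable_def, derivative_map, hderiv, hderiv_red]
    exact isCoprime_one_right
  obtain ⟨a, ha⟩ := IsSepClosed.exists_root _ (by rw [hp.degree_map, hdeg]; decide) hsep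
  obtain ⟨A, rfl⟩ := residue_surjective a
  obtain ⟨r, hr, -⟩ := HenselianLocalRing.is_henselian p hp A
    (by rw [← residue_eq_zero_iff, ← eval_map_apply]; exact ha)
    (by simpa [hderiv] using isUnit_two_mul_add_one h2 A)
  exact ⟨r, by simpa [p, sq] using hr⟩

lemma exists_add_add_mul_sq_eq_zero (h2 : (2 : S) ∈ maximalIdeal S) (s t : S) :
    ∃ β : S, s + β + t * β ^ 2 = 0 := by
  obtain ⟨r, hr⟩ := exists_mul_self_add_self_add_eq_zero h2 (s * t)
  -- the roots `r` and `-1 - r` sum to `-1`, so one of `r + 1` and `-r` is a unit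
  obtain ⟨ρ, hρ, hu⟩ : ∃ ρ : S, ρ * ρ + ρ + s * t = 0 ∧ IsUnit (ρ + 1) := by
    by_cases hu : IsUnit (r + 1)
    · exact ⟨r, hr, hu⟩
    · refine ⟨-1 - r, by linear_combination hr, ?_⟩
      convert isUnit_one_sub_self_of_mem_nonunits _ hu using 1
      ring
  -- `β = -s / (ρ + 1)`: multiplied by `(ρ + 1)²`, the equation becomes `s (ρ² + ρ + st) = 0`
  refine ⟨-s * ↑hu.unit⁻¹, (hu.pow 2).mul_right_eq_zero.mp ?_⟩
  have hβ : -s * ↑hu.unit⁻¹ * (ρ + 1) = -s := by rw [mul_assoc, hu.val_inv_mul, mul_one]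
  linear_combination (ρ + 1 + t * (-s * ↑hu.unit⁻¹ * (ρ + 1) - s)) * hβ + s * hρ

end Henselian

lemma nonempty_basis_fin_of_isCompl {S M : Type*} [CommRing S] [IsLocalRing S] [AddCommGroup M]
    [Module S M] {m n : ℕ} {P N : Submodule S M} (h : IsCompl P N)
    (bM : Basis (Fin (m + n)) S M) (bP : Basis (Fin m) S P) : Nonempty (Basis (Fin n) S N) := by
  have : Module.Finite S M := .of_basis bM
  have : Module.Free S M := .of_basis bM
  have : Module.Finite S N := .of_surjective _ (projectionOnto_surjective h.symm)
  have : Module.Projective S N := .of_split N.subtype _ (projectionOnto_comp_subtype h.symm)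
  have : Module.Free S N := free_of_flat_of_isLocalRing
  have : Module.Free S P := .of_basis bP
  have : Module.Finite S P := .of_basis bP
  have hrank := (prodEquivOfIsCompl P N h).finrank_eq
  rw [finrank_prod, finrank_eq_card_basis bP, finrank_eq_card_basis bM] at hrank
  exact ⟨finBasisOfFinrankEq S N (by simpa using hrank)⟩

namespace LinearMap.BilinForm

variable {S M : Type*} [CommRing S] [AddCommGroup M] [Module S M] (b : BilinForm S M)

lemma mem_orthogonal_span_iff {s : Set M} {m : M} :
    m ∈ b.orthogonal (span S s) ↔ ∀ x ∈ s, b x m = 0 := by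
  have := span_le (p := LinearMap.ker (b.flip m)) (s := s)
  simp only [SetLike.le_def, Set.subset_def, LinearMap.mem_ker, flip_apply] at this
  simpa [mem_orthogonal_iff] using this

lemma bijective_flip_restrict_orthogonal {P : Submodule S M} (hP : IsCompl P (b.orthogonal P))
    (hb : Function.Bijective b.flip) : Function.Bijective (b.restrict (b.orthogonal P)).flip := by
  set N := b.orthogonal P
  constructor
  · refine (injective_iff_map_eq_zero _).mpr fun v hv ↦ Subtype.ext ?_
    refine (injective_iff_map_eq_zero _).mp hb.1 v (LinearMap.ext fun m ↦ ?_)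
    obtain ⟨p, hp, n, hn, rfl⟩ := mem_sup.mp (hP.codisjoint.eq_top ▸ mem_top : m ∈ P ⊔ N)
    have hpv : b p v = 0 := v.2 p hp
    have hnv : b n v = 0 := LinearMap.congr_fun hv ⟨n, hn⟩
    simp [hpv, hnv]
  · intro ψ
    obtain ⟨v, hv⟩ := hb.2 (ψ ∘ₗ N.projectionOnto P hP.symm)
    have hbv (m : M) : b m v = ψ (N.projectionOnto P hP.symm m) := LinearMap.congr_fun hv m
    have hvN : v ∈ N := fun p hp ↦ by
      rw [show b p v = _ from hbv p, (projectionOnto_apply_eq_zero_iff hP.symm).mpr hp, map_zero]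
    exact ⟨⟨v, hvN⟩, LinearMap.ext fun u ↦ by simp [hbv, projectionOnto_apply_left]⟩


lemma isCompl_span_orthogonal_of_hyperbolic {e f : M} (he : b e e = 0) (hf : b f f = 0)
    (hef : b e f = 1) (hfe : b f e = 1) :
    IsCompl (span S (Set.range ![e, f])) (b.orthogonal (span S (Set.range ![e, f]))) := by
  have hmem (m : M) :
      m ∈ b.orthogonal (span S (Set.range ![e, f])) ↔ b e m = 0 ∧ b f m = 0 := by
    rw [mem_orthogonal_span_iff, Set.forall_mem_range, Fin.forall_fin_two]
    rfl
  constructor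
  · rw [disjoint_def]
    intro x hxP hxN
    obtain ⟨c, rfl⟩ := (mem_span_range_iff_exists_fun S).mp hxP
    rw [hmem] at hxN
    simp only [Fin.sum_univ_two, Matrix.cons_val_zero, Matrix.cons_val_one, map_add, map_smul,
      smul_eq_mul, he, hf, hef, hfe, mul_zero, mul_one, zero_add, add_zero] at hxN
    simp [Fin.sum_univ_two, hxN]
  · rw [codisjoint_iff, eq_top_iff]
    intro m _
    refine mem_sup.mpr ⟨b f m • e + b e m • f, ?_, m - (b f m • e + b e m • f), ?_,
      add_sub_cancel _ _⟩
    · exact add_mem (smul_mem _ _ (subset_span ⟨0, rfl⟩))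
        (smul_mem _ _ (subset_span ⟨1, rfl⟩))
    · rw [hmem]
      simp [he, hf, hef, hfe]

lemma linearIndependent_of_hyperbolic {e f : M} (he : b e e = 0) (hf : b f f = 0)
    (hef : b e f = 1) (hfe : b f e = 1) : LinearIndependent S ![e, f] := by
  refine LinearIndependent.pair_iff.mpr fun s t hst ↦ ⟨?_, ?_⟩
  · simpa [hef, hf] using congrArg (b · f) hst
  · simpa [he, hfe] using congrArg (b · e) hst

lemma exists_isotropic_partner (hsymm : ∀ u v, b u v = b v u)
    (heven : ∀ x, ∃ s, b x x = 2 * s) {e y : M} (he : b e e = 0) (hey : IsUnit (b e y)) :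
    ∃ f, b f f = 0 ∧ b e f = 1 := by
  set y' := (↑hey.unit⁻¹ : S) • y
  have hey' : b e y' = 1 := by simp [y', hey.val_inv_mul]
  obtain ⟨t, ht⟩ := heven y'
  refine ⟨y' - t • e, ?_, ?_⟩
  · simp only [map_sub, map_smul, LinearMap.sub_apply, LinearMap.smul_apply, smul_eq_mul, ht, he,
      hey', hsymm y' e]
    ring
  · simp [hey', he]

lemma exists_hyperbolic_pair [HenselianLocalRing S] [IsSepClosed (ResidueField S)]
    (h2 : (2 : S) ∈ maximalIdeal S) (hsymm : ∀ u v, b u v = b v u)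
    (heven : ∀ x, ∃ s, b x x = 2 * s) {x y : M} (hxy : b x y = 1) :
    ∃ e f, b e e = 0 ∧ b f f = 0 ∧ b e f = 1 := by
  obtain ⟨s, hs⟩ := heven x
  obtain ⟨t, ht⟩ := heven y
  obtain ⟨β, hβ⟩ := exists_add_add_mul_sq_eq_zero h2 s t
  have hyx : b y x = 1 := hsymm y x ▸ hxy
  have he : b (x + β • y) (x + β • y) = 0 := by
    simp only [map_add, map_smul, LinearMap.add_apply, LinearMap.smul_apply, smul_eq_mul, hs, ht,
      hxy, hyx]
    linear_combination 2 * hβ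
  have hey : b (x + β • y) y = 2 * (t * β) + 1 := by
    simp only [map_add, map_smul, LinearMap.add_apply, LinearMap.smul_apply, smul_eq_mul, hxy, ht]
    ring
  obtain ⟨f, hf, hef⟩ :=
    exists_isotropic_partner b hsymm heven he (hey ▸ isUnit_two_mul_add_one h2 _)
  exact ⟨_, f, he, hf, hef⟩

/-- The Gram matrix of `b` in the family `v` is `J(2n)`: block diagonal with blocks
`!![0, 1; 1, 0]`, one for each `i : ι`. -/
def IsHyperbolic {ι : Type*} [DecidableEq ι] (v : ι × Fin 2 → M) : Prop :=
  ∀ i j, b (v i) (v j) = if i.1 = j.1 ∧ i.2 ≠ j.2 then 1 else 0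

variable {b} in
lemma IsHyperbolic.reindex {ι κ : Type*} [DecidableEq ι] [DecidableEq κ]
    {B : Basis (ι × Fin 2) S M} (hB : b.IsHyperbolic B) (σ : ι ≃ κ) :
    b.IsHyperbolic (B.reindex (σ.prodCongr (Equiv.refl _))) := by
  intro i j
  simp [hB _ _]

lemma exists_isHyperbolic_basis_option {ι : Type*} [DecidableEq ι]
    (hsymm : ∀ u v, b u v = b v u) {e f : M} (he : b e e = 0) (hf : b f f = 0) (hef : b e f = 1)
    (BN : Basis (ι × Fin 2) S (b.orthogonal (span S (Set.range ![e, f]))))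
    (hBN : (b.restrict _).IsHyperbolic BN) :
    ∃ B : Basis (Option ι × Fin 2) S M, b.IsHyperbolic B := by
  have hfe : b f e = 1 := hsymm f e ▸ hef
  have hPN := isCompl_span_orthogonal_of_hyperbolic b he hf hef hfe
  let BP := Basis.span (linearIndependent_of_hyperbolic b he hf hef hfe)
  refine ⟨((BP.prod BN).map (prodEquivOfIsCompl _ _ hPN)).reindex optionProdEquiv.symm, ?_⟩
  have hortho (a : Fin 2) (w : b.orthogonal (span S (Set.range ![e, f]))) :
      b (![e, f] a) w = 0 :=
    w.2 _ (subset_span ⟨a, rfl⟩)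
  rintro ⟨_ | i, a⟩ ⟨_ | j, c⟩ <;> simp only [BP, Basis.coe_reindex,
    Equiv.symm_symm, Function.comp_apply, optionProdEquiv_mk_none, optionProdEquiv_mk_some,
    Basis.map_apply, Basis.prod_apply, coe_inl, coe_inr, Sum.elim_inl, Sum.elim_inr,
    Basis.span_apply, coe_prodEquivOfIsCompl', ZeroMemClass.coe_zero, add_zero, zero_add,
    Option.some.injEq, reduceCtorEq, ne_eq, true_and, false_and, ite_not, ↓reduceIte]
  · fin_cases a <;> fin_cases c <;> simp [he, hf, hef, hfe]
  · exact hortho a _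
  · rw [hsymm]
    exact hortho c _
  · simpa using hBN (i, a) (j, c)

end LinearMap.BilinForm

open LinearMap.BilinForm in
theorem exists_isHyperbolic_basis {S : Type*} [CommRing S] [HenselianLocalRing S]
    [IsSepClosed (ResidueField S)] (h2 : (2 : S) ∈ maximalIdeal S) (n : ℕ) {M : Type*}
    [AddCommGroup M] [Module S M] (bM : Basis (Fin (2 * n)) S M) (b : BilinForm S M)
    (hperf : Function.Bijective b.flip) (hsymm : ∀ u v, b u v = b v u)
    (heven : ∀ x, ∃ s, b x x = 2 * s) :
    ∃ B : Basis (Fin n × Fin 2) S M, b.IsHyperbolic B := by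
  induction n generalizing M with
  | zero =>
    exact ⟨bM.reindex ((finCongr (mul_zero 2)).trans (Equiv.equivOfIsEmpty _ _)), (·.1.elim0)⟩
  | succ k ih =>
    set i₀ : Fin (2 * (k + 1)) := ⟨0, by omega⟩
    obtain ⟨y, hy⟩ := hperf.2 (bM.coord i₀)
    obtain ⟨e, f, he, hf, hef⟩ :=
      exists_hyperbolic_pair b h2 hsymm heven (by simpa using LinearMap.congr_fun hy (bM i₀))
    have hfe : b f e = 1 := hsymm f e ▸ hef
    have hPN := isCompl_span_orthogonal_of_hyperbolic b he hf hef hfe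
    obtain ⟨BN⟩ := nonempty_basis_fin_of_isCompl (m := 2) (n := 2 * k) hPN
      (bM.reindex (finCongr (by ring))) (.span (linearIndependent_of_hyperbolic b he hf hef hfe))
    obtain ⟨B', hB'⟩ := ih BN (b.restrict _) (bijective_flip_restrict_orthogonal b hPN hperf)
      (fun u v ↦ hsymm u v) (fun x ↦ heven x)
    obtain ⟨B, hB⟩ := exists_isHyperbolic_basis_option b hsymm he hf hef B' hB'
    exact ⟨_, hB.reindex (finSuccEquiv k).symm⟩

theorem stmt_0_general (S : Type*) [CommRing S]
    [IsAdicComplete (Ideal.span {(2 : S)}) S] [HenselianLocalRing S]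
    [IsSepClosed (IsLocalRing.ResidueField S)]
    (n : ℕ) (M : Type*) [AddCommGroup M] [Module S M]
    (bM : Module.Basis (Fin (2 * n)) S M)
    (b : LinearMap.BilinForm S M)
    (hperf : Function.Bijective ⇑b.flip)
    (hsymm : ∀ u v : M, b u v = b v u)
    (halt2 : ∀ x : M, ∃ s : S, b x x = 2 * s) :
    ∃ B : Module.Basis (Fin n × Fin 2) S M,
      ∀ i j : Fin n × Fin 2,
        b (B i) (B j) = if i.1 = j.1 ∧ i.2 ≠ j.2 then 1 else 0 := by
  have h2 : (2 : S) ∈ maximalIdeal S := by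
    rw [← jacobson_eq_maximalIdeal ⊥ bot_ne_top]
    exact IsAdicComplete.le_jacobson_bot _ (Ideal.mem_span_singleton_self 2)
  exact exists_isHyperbolic_basis h2 n bM b hperf hsymm halt2

/-- Proposition 3.4 (a): over a 2-adically complete Noetherian strictly henselian local
ring `S`, a perfect symmetric bilinear form on a free module of rank `2n` whose reduction
modulo 2 is alternating admits a symplectic-like basis with Gram matrix `J(2n)`. -/
theorem stmt_0 (S : Type*) [CommRing S] [IsLocalRing S] [IsNoetherianRing S]
    [IsAdicComplete (Ideal.span {(2 : S)}) S] [HenselianLocalRing S]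
    [IsSepClosed (IsLocalRing.ResidueField S)]
    (n : ℕ) (M : Type*) [AddCommGroup M] [Module S M]
    (bM : Module.Basis (Fin (2 * n)) S M)
    (b : LinearMap.BilinForm S M)
    (hperf : Function.Bijective ⇑b.flip)
    (hsymm : ∀ u v : M, b u v = b v u)
    (halt2 : ∀ x : M, ∃ s : S, b x x = 2 * s) :
    ∃ B : Module.Basis (Fin n × Fin 2) S M,
      ∀ i j : Fin n × Fin 2,
        b (B i) (B j) = if i.1 = j.1 ∧ i.2 ≠ j.2 then 1 else 0 :=
  stmt_0_general S n M bM b hperf hsymm halt2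
end

section
/- Let S be a reduced commutative local ring and let M₀ be a finite free S-module. Let I₀ : End_S(M₀) → End_S(M₀) be an S-linear anti-automorphism of the endomorphism algebra of M₀ satisfying I₀ ∘ I₀ = id (an involution of End_S(M₀) fixing S). Then there exists a perfect bilinear form b₀ on M₀ such that b₀(x(u), v) = b₀(u, I₀(x)(v)) for every x ∈ End_S(M₀) and all u, v ∈ M₀. -/
/-!
Take a rank-one idempotent `e = δ.smulRight m` with `δ m = 1`. Since `e * y * e ∈ S • e` for all
`y`, its image `f = I₀ e` is an idempotent with `f * x * f ∈ S • f` for all `x`. Over a local ring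
the range of `f` is free, and this corner condition forces it to have rank one, so
`f = ε.smulRight w` with `ε w = 1`. The form `b u v = ε (I₀ (δ.smulRight v) u)` then has `I₀` as
its adjoint involution, and `η ↦ I₀ (η.smulRight w) m` inverts `v ↦ b · v`.
-/

open Module LinearMap

section

variable {S M : Type*} [CommRing S] [AddCommGroup M] [Module S M]

namespace LinearMap

theorem mul_smulRight (x : End S M) (δ : M →ₗ[S] S) (v : M) :
    x * δ.smulRight v = δ.smulRight (x v) := by
  ext u
  simp

theorem smulRight_mul_smulRight (δ φ : M →ₗ[S] S) (v u : M) :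
    δ.smulRight v * φ.smulRight u = δ u • φ.smulRight v := by
  ext x
  simp [smul_smul, mul_comm]

theorem smulRight_mul_mul_smulRight (δ : M →ₗ[S] S) (m : M) (y : End S M) :
    δ.smulRight m * y * δ.smulRight m = δ (y m) • δ.smulRight m := by
  rw [mul_assoc, mul_smulRight, smulRight_mul_smulRight]

theorem isIdempotentElem_smulRight {δ : M →ₗ[S] S} {m : M} (hδ : δ m = 1) :
    IsIdempotentElem (δ.smulRight m) := by
  rw [IsIdempotentElem, smulRight_mul_smulRight, hδ, one_smul]

end LinearMap

theorem Module.Free.exists_apply_eq_one [Module.Free S M] [Nontrivial M] :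
    ∃ (δ : M →ₗ[S] S) (m : M), δ m = 1 := by
  let b := Module.Free.chooseBasis S M
  obtain ⟨i⟩ := b.index_nonempty
  exact ⟨b.coord i, b i, by simp⟩

theorem Module.Basis.subsingleton_index_of_forall_exists_eq_smul [Nontrivial S] {κ : Type*}
    (b : Basis κ S M) (h : ∀ i j, ∃ c : S, b j = c • b i) : Subsingleton κ := by
  classical
  refine ⟨fun i j => by_contra fun hij => ?_⟩
  obtain ⟨c, hc⟩ := h i j
  have := congrArg (fun p => b.repr p j) hc
  simp [hij] at this

theorem IsIdempotentElem.free_range [IsLocalRing S] [Module.Finite S M] [Module.Projective S M]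
    {f : End S M} (hf : IsIdempotentElem f) : Module.Free S (range f) := by
  have : Module.Projective S (range f) :=
    .of_split (range f).subtype f.rangeRestrict (by ext ⟨p, hp⟩; exact (hf.mem_range_iff.mp hp))
  have : Module.FinitePresentation S (range f) := Module.finitePresentation_of_projective S _
  exact Module.free_of_flat_of_isLocalRing

theorem IsIdempotentElem.exists_eq_smulRight [IsLocalRing S] [Module.Finite S M]
    [Module.Projective S M] {f : End S M} (hf : IsIdempotentElem f) (hf0 : f ≠ 0)
    (hcorner : ∀ x, ∃ c : S, f * x * f = c • f) :
    ∃ (ε : M →ₗ[S] S) (w : M), f = ε.smulRight w ∧ ε w = 1 := by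
  have := hf.free_range
  let b := Module.Free.chooseBasis S (range f)
  have hfix (p : range f) : f.rangeRestrict p = p := Subtype.ext (hf.mem_range_iff.mp p.2)
  have : Nontrivial (range f) := Submodule.nontrivial_iff_ne_bot.mpr (range_eq_bot.not.mpr hf0)
  have : Subsingleton _ := b.subsingleton_index_of_forall_exists_eq_smul fun i j => by
    obtain ⟨c, hc⟩ := hcorner ((b.coord i ∘ₗ f.rangeRestrict).smulRight (b j : M))
    refine ⟨c, Subtype.ext ?_⟩
    have := congr($hc (b i : M))
    simpa [hfix, (hf.mem_range_iff.mp (b _).2)] using this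
  let : Unique _ := uniqueOfSubsingleton b.index_nonempty.some
  let e : range f ≃ₗ[S] S := b.equivFun.trans (LinearEquiv.funUnique _ S S)
  refine ⟨e ∘ₗ f.rangeRestrict, e.symm 1, ?_, by simp [hfix]⟩
  ext u
  have : f.rangeRestrict u = e (f.rangeRestrict u) • e.symm 1 := by
    rw [← map_smul, smul_eq_mul, mul_one, LinearEquiv.symm_apply_apply]
  exact congr(($this : M))

section AntiInvolution

variable (I : End S M →ₗ[S] End S M) (δ ε : M →ₗ[S] S)

def formOfAntiInvolution : LinearMap.BilinForm S M :=
  (llcomp S M M S ε ∘ₗ I ∘ₗ smulRightₗ δ).flip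

@[simp]
theorem formOfAntiInvolution_apply (u v : M) :
    formOfAntiInvolution I δ ε u v = ε (I (δ.smulRight v) u) := rfl

variable {I δ ε}

theorem formOfAntiInvolution_apply_left (hanti : ∀ x y, I (x * y) = I y * I x)
    (hinv : ∀ x, I (I x) = x) (x : End S M) (u v : M) :
    formOfAntiInvolution I δ ε (x u) v = formOfAntiInvolution I δ ε u (I x v) := by
  rw [formOfAntiInvolution_apply, formOfAntiInvolution_apply, ← mul_smulRight, hanti, hinv,
    Module.End.mul_apply]

theorem bijective_flip_formOfAntiInvolution (hanti : ∀ x y, I (x * y) = I y * I x)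
    (hinv : ∀ x, I (I x) = x) {m w : M} (hδ : δ m = 1) (hε : ε w = 1)
    (he : I (δ.smulRight m) = ε.smulRight w) :
    Function.Bijective (formOfAntiInvolution I δ ε).flip := by
  have hI (y : End S M) : I (δ.smulRight (y m)) = ε.smulRight w * I y := by
    rw [← mul_smulRight, hanti, he]
  refine ⟨(injective_iff_map_eq_zero _).mpr fun v hv => ?_, fun η => ?_⟩
  · have hI0 : I (δ.smulRight v) = 0 := by
      have := hI (δ.smulRight v)
      rw [smulRight_apply, hδ, one_smul] at this
      ext u
      have hvu : ε (I (δ.smulRight v) u) = 0 := congr($hv u)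
      rw [this, Module.End.mul_apply, smulRight_apply, hvu, zero_smul, LinearMap.zero_apply]
    have := congr($(hinv (δ.smulRight v)) m)
    rwa [hI0, map_zero, LinearMap.zero_apply, smulRight_apply, hδ, one_smul, eq_comm] at this
  · refine ⟨I (η.smulRight w) m, ?_⟩
    ext u
    simp [hI, hinv, hε]

end AntiInvolution

end

theorem stmt_1_general (S : Type*) [CommRing S] [IsLocalRing S]
    (M₀ : Type*) [AddCommGroup M₀] [Module S M₀] [Module.Free S M₀] [Module.Finite S M₀]
    (I₀ : Module.End S M₀ →ₗ[S] Module.End S M₀)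
    (hanti : ∀ x y : Module.End S M₀, I₀ (x * y) = I₀ y * I₀ x)
    (hinv : ∀ x : Module.End S M₀, I₀ (I₀ x) = x) :
    ∃ b₀ : LinearMap.BilinForm S M₀,
      Function.Bijective ⇑b₀.flip ∧
      ∀ (x : Module.End S M₀) (u v : M₀), b₀ (x u) v = b₀ u ((I₀ x) v) := by
  rcases subsingleton_or_nontrivial M₀ with hM | hM
  · exact ⟨0, ⟨fun _ _ _ => Subsingleton.elim _ _, fun _ => ⟨0, Subsingleton.elim _ _⟩⟩,
      by simp⟩
  obtain ⟨δ, m, hδ⟩ := Module.Free.exists_apply_eq_one (S := S) (M := M₀)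
  set e := δ.smulRight m
  have hf : IsIdempotentElem (I₀ e) := by
    rw [IsIdempotentElem, ← hanti, (isIdempotentElem_smulRight hδ).eq]
  have hm : m ≠ 0 := by
    rintro rfl
    simp at hδ
  have he0 : e ≠ 0 := fun h => hm (by simpa [e, hδ] using congr($h m))
  have hf0 : I₀ e ≠ 0 := fun h => he0 (by rw [← hinv e, h, map_zero])
  have hcorner (x : End S M₀) : ∃ c : S, I₀ e * x * I₀ e = c • I₀ e := by
    refine ⟨δ (I₀ x m), ?_⟩
    rw [← hinv x, ← hanti, ← hanti, ← mul_assoc, smulRight_mul_mul_smulRight, map_smul, hinv]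
  obtain ⟨ε, w, hfe, hε⟩ := hf.exists_eq_smulRight hf0 hcorner
  exact ⟨formOfAntiInvolution I₀ δ ε, bijective_flip_formOfAntiInvolution hanti hinv hδ hε hfe,
    formOfAntiInvolution_apply_left hanti hinv⟩

/-- Lemma 3.3.1 (a): an involution of the first kind on the endomorphism algebra of a
finite free module over a reduced commutative local ring is the adjoint involution of a
perfect bilinear form. -/
theorem stmt_1 (S : Type*) [CommRing S] [IsLocalRing S] [IsReduced S]
    (M₀ : Type*) [AddCommGroup M₀] [Module S M₀] [Module.Free S M₀] [Module.Finite S M₀]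
    (I₀ : Module.End S M₀ →ₗ[S] Module.End S M₀)
    (hbij : Function.Bijective ⇑I₀)
    (hanti : ∀ x y : Module.End S M₀, I₀ (x * y) = I₀ y * I₀ x)
    (hone : I₀ 1 = 1)
    (hinv : ∀ x : Module.End S M₀, I₀ (I₀ x) = x) :
    ∃ b₀ : LinearMap.BilinForm S M₀,
      Function.Bijective ⇑b₀.flip ∧
      ∀ (x : Module.End S M₀) (u v : M₀), b₀ (x u) v = b₀ u ((I₀ x) v) :=
  stmt_1_general S M₀ I₀ hanti hinv
end

section
/- Let S be a reduced commutative local ring, M₀ a finite free S-module, and I₀ : End_S(M₀) → End_S(M₀) an S-linear anti-automorphism with I₀ ∘ I₀ = id. If b₀ and b₀′ are two perfect bilinear forms on M₀ each satisfying b(x(u), v) = b(u, I₀(x)(v)) for every x ∈ End_S(M₀) and all u, v ∈ M₀, then there exists a unit s ∈ S× such that b₀′(u,v) = s · b₀(u,v) for all u, v ∈ M₀. -/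
/-!
Two perfect forms differ by an automorphism `g`: `b₀' u v = b₀ u (g v)`. If both forms
make every `x` adjoint to `I₀ x`, then `g` commutes with the image of `I₀`, which is all of
`End_S(M₀)`. The centre of the endomorphism ring of a free module consists of scalars, so `g` is
multiplication by some `s`, and `s` is a unit because `g⁻¹` is a scalar as well.
-/

open Module Function

namespace Module.End

variable {S M : Type*} [CommRing S] [AddCommGroup M] [Module S M] [Free S M]

theorem exists_eq_smul_of_forall_commute {f : End S M} (hf : ∀ y : End S M, Commute y f) :
    ∃ s : S, ∀ v, f v = s • v := by
  obtain ⟨s, -, rfl⟩ := mem_center_iff.mp (Semigroup.mem_center_iff.mpr fun y => (hf y).eq)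
  exact ⟨s, fun _ => rfl⟩

theorem exists_unit_eq_smul_of_forall_commute {g : M ≃ₗ[S] M}
    (hg : ∀ y : End S M, Commute y g) : ∃ s : Sˣ, ∀ v, g v = (s : S) • v := by
  obtain ⟨s, hs⟩ := exists_eq_smul_of_forall_commute hg
  obtain ⟨t, ht⟩ := exists_eq_smul_of_forall_commute (f := (g.symm : End S M)) fun y => by
    ext v
    apply g.injective
    simpa using (LinearMap.congr_fun (hg y).eq (g.symm v)).symm
  cases subsingleton_or_nontrivial M
  · exact ⟨1, fun v => Subsingleton.elim _ _⟩
  have hst : s * t = 1 := eq_of_smul_eq_smul (α := M) fun v => by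
    rw [mul_smul, ← ht, ← hs]
    simp
  exact ⟨⟨s, t, hst, mul_comm t s ▸ hst⟩, hs⟩

end Module.End

namespace LinearMap.BilinForm

variable {S M : Type*} [CommRing S] [AddCommGroup M] [Module S M]
  {b b' : LinearMap.BilinForm S M}

noncomputable def comparison (hb : Bijective b.flip) (hb' : Bijective b'.flip) : M ≃ₗ[S] M :=
  (LinearEquiv.ofBijective b'.flip hb').trans (LinearEquiv.ofBijective b.flip hb).symm

theorem apply_comparison (hb : Bijective b.flip) (hb' : Bijective b'.flip) (u v : M) :
    b' u v = b u (comparison hb hb' v) := by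
  have : b.flip (comparison hb hb' v) = b'.flip v :=
    (LinearEquiv.ofBijective b.flip hb).apply_symm_apply _
  exact congr($this u).symm

theorem commute_comparison {σ : End S M → End S M} (hσ : Surjective σ)
    (hb : Bijective b.flip) (hb' : Bijective b'.flip)
    (hadj : ∀ x : End S M, IsAdjointPair b b ⇑x ⇑(σ x))
    (hadj' : ∀ x : End S M, IsAdjointPair b' b' ⇑x ⇑(σ x))
    (y : End S M) : Commute y (comparison hb hb') := by
  obtain ⟨x, rfl⟩ := hσ y
  ext v
  refine hb.1 (LinearMap.ext fun u => ?_)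
  let g := comparison hb hb'
  show b u (σ x (g v)) = b u (g (σ x v))
  calc b u (σ x (g v)) = b (x u) (g v) := (hadj x u (g v)).symm
    _ = b' (x u) v := (apply_comparison hb hb' _ _).symm
    _ = b' u (σ x v) := hadj' x u v
    _ = b u (g (σ x v)) := apply_comparison hb hb' _ _

end LinearMap.BilinForm

theorem stmt_2_general (S : Type*) [CommRing S]
    (M₀ : Type*) [AddCommGroup M₀] [Module S M₀] [Module.Free S M₀]
    (I₀ : Module.End S M₀ →ₗ[S] Module.End S M₀)
    (hbij : Function.Bijective ⇑I₀)
    (b₀ b₀' : LinearMap.BilinForm S M₀)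
    (hperf : Function.Bijective ⇑b₀.flip)
    (hperf' : Function.Bijective ⇑b₀'.flip)
    (hadj : ∀ (x : Module.End S M₀) (u v : M₀), b₀ (x u) v = b₀ u ((I₀ x) v))
    (hadj' : ∀ (x : Module.End S M₀) (u v : M₀), b₀' (x u) v = b₀' u ((I₀ x) v)) :
    ∃ s : Sˣ, ∀ u v : M₀, b₀' u v = (s : S) * b₀ u v := by
  obtain ⟨s, hs⟩ := Module.End.exists_unit_eq_smul_of_forall_commute
    (LinearMap.BilinForm.commute_comparison hbij.2 hperf hperf' hadj hadj')
  refine ⟨s, fun u v => ?_⟩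
  rw [LinearMap.BilinForm.apply_comparison hperf hperf', hs, map_smul, smul_eq_mul]

/-- Lemma 3.3.1 (b): a perfect bilinear form defining a given involution of the first kind
on the endomorphism algebra of a finite free module over a reduced commutative local ring
is unique up to multiplication by a unit. -/
theorem stmt_2 (S : Type*) [CommRing S] [IsLocalRing S] [IsReduced S]
    (M₀ : Type*) [AddCommGroup M₀] [Module S M₀] [Module.Free S M₀] [Module.Finite S M₀]
    (I₀ : Module.End S M₀ →ₗ[S] Module.End S M₀)
    (hbij : Function.Bijective ⇑I₀)
    (hanti : ∀ x y : Module.End S M₀, I₀ (x * y) = I₀ y * I₀ x)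
    (hone : I₀ 1 = 1)
    (hinv : ∀ x : Module.End S M₀, I₀ (I₀ x) = x)
    (b₀ b₀' : LinearMap.BilinForm S M₀)
    (hperf : Function.Bijective ⇑b₀.flip)
    (hperf' : Function.Bijective ⇑b₀'.flip)
    (hadj : ∀ (x : Module.End S M₀) (u v : M₀), b₀ (x u) v = b₀ u ((I₀ x) v))
    (hadj' : ∀ (x : Module.End S M₀) (u v : M₀), b₀' (x u) v = b₀' u ((I₀ x) v)) :
    ∃ s : Sˣ, ∀ u v : M₀, b₀' u v = (s : S) * b₀ u v :=
  stmt_2_general S M₀ I₀ hbij b₀ b₀' hperf hperf' hadj hadj'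
end

section
/- Let S be a commutative local integral domain and M₀ a finite free S-module. Let b₀ be a perfect bilinear form on M₀ and let I₀ : End_S(M₀) → End_S(M₀) be a map such that b₀(x(u), v) = b₀(u, I₀(x)(v)) for every x ∈ End_S(M₀) and all u, v ∈ M₀, and assume I₀ ∘ I₀ = id. Then b₀ is either alternating, or b₀ is symmetric and non-alternating. -/
/-- Lemma 3.3.1 (c): over a local integral domain, a perfect bilinear form whose adjoint
anti-automorphism is an involution is either alternating or non-alternating symmetric. -/
theorem stmt_3 (S : Type*) [CommRing S] [IsLocalRing S] [IsDomain S]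
    (M₀ : Type*) [AddCommGroup M₀] [Module S M₀] [Module.Free S M₀] [Module.Finite S M₀]
    (b₀ : LinearMap.BilinForm S M₀)
    (hperf : Function.Bijective ⇑b₀.flip)
    (I₀ : Module.End S M₀ → Module.End S M₀)
    (hadj : ∀ (x : Module.End S M₀) (u v : M₀), b₀ (x u) v = b₀ u ((I₀ x) v))
    (hinv : ∀ x : Module.End S M₀, I₀ (I₀ x) = x) :
    (∀ x : M₀, b₀ x x = 0) ∨
      ((∀ u v : M₀, b₀ u v = b₀ v u) ∧ ¬ (∀ x : M₀, b₀ x x = 0)) := by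
  have hinj : ∀ a a' : M₀, (∀ u, b₀ u a = b₀ u a') → a = a' := by
    intro a a' h
    exact hperf.1 (LinearMap.ext h)
  -- Key identity: b₀ u v * b₀ z w = b₀ v u * b₀ w z for all u v w z.
  have key : ∀ u v w z : M₀, b₀ u v * b₀ z w = b₀ v u * b₀ w z := by
    intro u v w z
    obtain ⟨w', hw'⟩ := hperf.2 (b₀ w)
    have hw'' : ∀ z, b₀ z w' = b₀ w z := fun z => by
      simpa using LinearMap.congr_fun hw' z
    set x : Module.End S M₀ := (b₀.flip v).smulRight w with hx
    set y : Module.End S M₀ := (b₀ w).smulRight v with hy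
    have h1 : I₀ x = y := by
      ext z
      apply hinj
      intro u
      rw [← hadj]
      simp [hx, hy, mul_comm]
    have h2 : I₀ y = (b₀ v).smulRight w' := by
      ext u
      apply hinj
      intro z
      rw [← hadj]
      simp [hy, hw'', mul_comm]
    have h3 : x = (b₀ v).smulRight w' := by rw [← hinv x, h1, h2]
    have h4 : b₀ u v • w = b₀ v u • w' := by
      simpa [hx] using LinearMap.congr_fun h3 u
    have h5 := congrArg (fun m => b₀ z m) h4
    simpa [hw'', mul_comm] using h5
  by_cases halt : ∀ x : M₀, b₀ x x = 0
  · exact Or.inl halt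
  · right
    refine ⟨fun u v => ?_, halt⟩
    have hex : ∃ x : M₀, b₀ x x ≠ 0 := by push_neg at halt; exact halt
    obtain ⟨x, hx⟩ := hex
    have := key x x v u
    exact mul_left_cancel₀ hx this
end

section
/- Let S be a field of characteristic 2 with Frobenius endomorphism Φ_S : S → S, s ↦ s², whose image Φ_S(S) = S² is a subfield of S. Let N be an S-vector space, b a symmetric bilinear form on N, and K = {x ∈ N : b(x,x) = 0} (an S-subspace of N). Then dim_S(N/K) ≤ [S : Φ_S(S)], where [S : Φ_S(S)] denotes the dimension of S as a vector space over the subfield Φ_S(S) (an inequality of cardinal-valued ranks in general). -/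
universe u v w

/-!
In characteristic 2 the diagonal `q x = b x x` of a symmetric bilinear form is additive, since
the cross terms `b x y + b y x = 2 b x y` vanish, and `q (s • x) = s² q x`. Hence `q` induces an
injective additive map `N ⧸ K → S` that is semilinear along the isomorphism `S ≃ S²`, `s ↦ s²`,
and such a map cannot decrease rank.
-/

open Cardinal

namespace LinearMap.BilinForm

variable {R M : Type*} [CommRing R] [CharP R 2] [AddCommGroup M] [Module R M]

theorem apply_add_add_of_charTwo {b : LinearMap.BilinForm R M} (hb : b.IsSymm) (x y : M) :
    b (x + y) (x + y) = b x x + b y y := by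
  have hcross : b x y + b y x = 0 := by rw [hb.eq x y, CharTwo.add_self_eq_zero]
  simp only [map_add, LinearMap.add_apply]
  linear_combination hcross

def diagAddHom {b : LinearMap.BilinForm R M} (hb : b.IsSymm) : M →+ R :=
  AddMonoidHom.mk' (fun x => b x x) (apply_add_add_of_charTwo hb)

@[simp]
theorem diagAddHom_apply {b : LinearMap.BilinForm R M} (hb : b.IsSymm) (x : M) :
    diagAddHom hb x = b x x :=
  rfl

end LinearMap.BilinForm

theorem lift_rank_quotient_le_rank_fieldRange {S : Type u} {L : Type w} {N : Type v}
    [DivisionRing S] [DivisionRing L] [AddCommGroup N] [Module S N]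
    (σ : S →+* L) (f : N →+ L) (hf : ∀ (s : S) (x : N), f (s • x) = σ s * f x)
    (K : Submodule S N) (hK : ∀ x : N, x ∈ K ↔ f x = 0) :
    lift.{w} (Module.rank S (N ⧸ K)) ≤ lift.{v} (Module.rank σ.fieldRange L) := by
  let j : N ⧸ K →+ L := QuotientAddGroup.lift K.toAddSubgroup f fun x hx => (hK x).1 hx
  have hj : ∀ x : N, j (Submodule.Quotient.mk x) = f x := fun _ => rfl
  let τ := σ.rangeRestrictFieldEquiv
  refine lift_rank_le_of_injective_injectiveₛ τ.symm j τ.symm.injective ?_ ?_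
  · refine (injective_iff_map_eq_zero j).2 ?_
    rintro ⟨x⟩ hx
    exact (Submodule.Quotient.mk_eq_zero K).2 ((hK x).2 hx)
  · rintro r ⟨x⟩
    have hr : σ (τ.symm r) = r := by
      rw [← σ.rangeRestrictFieldEquiv_apply_coe, RingEquiv.apply_symm_apply]
    change j (Submodule.Quotient.mk (τ.symm r • x)) = (r : L) * j (Submodule.Quotient.mk x)
    rw [hj, hj, hf, hr]

/-- Fact 3.1.1 (b): for a symmetric bilinear form `b` on a vector space `N` over a field
`S` of characteristic 2, the codimension of the subspace `K = {x | b(x,x) = 0}` is at most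
the degree `[S : S²]` of `S` over the image of its Frobenius endomorphism. -/
theorem stmt_6 (S : Type u) [Field S] [CharP S 2]
    (σ : S →+* S) (hσ : ∀ a : S, σ a = a ^ 2)
    (N : Type v) [AddCommGroup N] [Module S N]
    (b : LinearMap.BilinForm S N)
    (hsymm : ∀ u v : N, b u v = b v u)
    (K : Submodule S N) (hK : ∀ x : N, x ∈ K ↔ b x x = 0) :
    Cardinal.lift.{u} (Module.rank S (N ⧸ K)) ≤
      Cardinal.lift.{v} (Module.rank σ.fieldRange S) := by
  refine lift_rank_quotient_le_rank_fieldRange σ (LinearMap.BilinForm.diagAddHom ⟨hsymm⟩)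
    (fun s x => ?_) K hK
  simp only [LinearMap.BilinForm.diagAddHom_apply, map_smul, LinearMap.smul_apply, smul_eq_mul, hσ]
  ring
end

section
/- Let k be a perfect field of characteristic 2, W = W(k) its ring of 2-typical Witt vectors, and B the field of fractions of W. Let e ≥ 1 and let f ∈ W[t] be a monic polynomial of degree e which is Eisenstein with respect to the maximal ideal 2W (every coefficient of f other than the leading one lies in 2W, and the constant coefficient does not lie in 4W). Then, inside the polynomial ring B[t], the W-subalgebra generated by t together with the elements f^i/i! for all i ∈ ℕ is equal to the W-subalgebra generated by t together with the elements t^{e·i}/i! for all i ∈ ℕ. In particular, this W-algebra depends only on e and not on the choice of the Eisenstein polynomial f. -/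
/-!
Write `f = tᵉ + 2h` with `h ∈ W[t]`. Divided powers of a sum are sums of products of divided
powers, and `(2h)ⁿ/n! = (2ⁿ/n!) hⁿ` with `2ⁿ/n! ∈ W`, because `v₂(n!) ≤ n` and odd integers are
units in `W`. Hence the divided powers of `f` lie in the algebra generated by `t` and those of
`tᵉ`, and symmetrically, since `tᵉ = f + 2(-h)`.
-/

open scoped Nat

section LocalAtPrime

-- `hunit` below says that `R` is a `ℤ_(p)`-algebra.
variable {R : Type*} [CommRing R] {p : ℕ}

theorem natCast_factorial_dvd_prime_pow (hp : p.Prime)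
    (hunit : ∀ n : ℕ, ¬ p ∣ n → IsUnit (n : R)) (m : ℕ) : (m ! : R) ∣ (p : R) ^ m := by
  have hv : (m !).factorization p ≤ m :=
    (Nat.factorization_factorial_le_div_pred hp m).trans (Nat.div_le_self _ _)
  rw [← Nat.ordProj_mul_ordCompl_eq_self m ! p, Nat.cast_mul,
    (hunit _ (Nat.not_dvd_ordCompl hp m.factorial_ne_zero)).mul_right_dvd, Nat.cast_pow]
  exact pow_dvd_pow _ hv

theorem charZero_of_isUnit_natCast [IsDomain R] (hp : p.Prime)
    (hunit : ∀ n : ℕ, ¬ p ∣ n → IsUnit (n : R)) (hp0 : (p : R) ≠ 0) : CharZero R := by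
  refine charZero_of_inj_zero fun n hn => ?_
  by_contra hn0
  obtain ⟨k, m, hm, rfl⟩ := Nat.exists_eq_pow_mul_and_not_dvd hn0 p hp.one_lt.ne'
  rw [Nat.cast_mul, Nat.cast_pow] at hn
  exact mul_ne_zero (pow_ne_zero k hp0) (hunit m hm).ne_zero hn

end LocalAtPrime

namespace WittVector

variable {p : ℕ} [Fact p.Prime] {k : Type*} [Field k] [CharP k p]

theorem isUnit_natCast_of_not_dvd {n : ℕ} (hn : ¬ p ∣ n) : IsUnit (n : WittVector p k) := by
  apply isUnit_of_coeff_zero_ne_zero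
  rw [← constantCoeff_apply, map_natCast, Ne, CharP.cast_eq_zero_iff k p]
  exact hn

instance charZero : CharZero (WittVector p k) :=
  charZero_of_isUnit_natCast Fact.out (fun _ => isUnit_natCast_of_not_dvd) (p_nonzero p k)

end WittVector

section DividedPowers

open Finset

variable {R B A : Type*} [CommRing R] [Field B] [CharZero B] [CommRing A] [Algebra B A]
  [Algebra R A]

variable (B) in
def dividedPowerSet (x : A) : Set A := {g | ∃ i : ℕ, g = (i ! : B)⁻¹ • x ^ i}

theorem inv_factorial_smul_add_pow (a b : A) (n : ℕ) :
    (n ! : B)⁻¹ • (a + b) ^ n =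
      ∑ ij ∈ antidiagonal n, ((ij.1 ! : B)⁻¹ • a ^ ij.1) * ((ij.2 ! : B)⁻¹ • b ^ ij.2) := by
  rw [(Commute.all a b).add_pow', Finset.smul_sum]
  refine Finset.sum_congr rfl fun ij hij => ?_
  rw [HasAntidiagonal.mem_antidiagonal] at hij
  subst hij
  rw [smul_mul_smul_comm, ← Nat.cast_smul_eq_nsmul B, smul_smul]
  congr 1
  rw [Nat.cast_add_choose, inv_mul_eq_div,
    div_div_cancel_left' (Nat.cast_ne_zero.mpr (Nat.factorial_ne_zero _)), mul_inv]

theorem dividedPowerSet_add_subset {S : Subalgebra R A} {a b : A}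
    (ha : dividedPowerSet B a ⊆ S) (hb : dividedPowerSet B b ⊆ S) :
    dividedPowerSet B (a + b) ⊆ S := by
  rintro _ ⟨n, rfl⟩
  rw [inv_factorial_smul_add_pow]
  exact Subalgebra.sum_mem _ fun ij _ => mul_mem (ha ⟨ij.1, rfl⟩) (hb ⟨ij.2, rfl⟩)

theorem dividedPowerSet_natCast_mul_subset {p : ℕ} (hp : p.Prime)
    (hunit : ∀ n : ℕ, ¬ p ∣ n → IsUnit (n : R)) {S : Subalgebra R A} {H : A} (hH : H ∈ S) :
    dividedPowerSet B ((p : A) * H) ⊆ S := by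
  rintro _ ⟨n, rfl⟩
  obtain ⟨w, hw⟩ := natCast_factorial_dvd_prime_pow hp hunit n
  have : ((p : A) * H) ^ n = (n ! : B) • w • H ^ n := by
    rw [mul_pow, ← map_natCast (algebraMap R A), ← map_pow, hw, map_mul, map_natCast,
      Algebra.smul_def w, Nat.cast_smul_eq_nsmul, nsmul_eq_mul, mul_assoc]
  rw [this, inv_smul_smul₀ (Nat.cast_ne_zero.mpr n.factorial_ne_zero)]
  exact Subalgebra.smul_mem _ (pow_mem hH n) w

theorem adjoin_union_dividedPowerSet_le {p : ℕ} (hp : p.Prime)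
    (hunit : ∀ n : ℕ, ¬ p ∣ n → IsUnit (n : R)) {T : Set A} {x y H : A}
    (hH : H ∈ Algebra.adjoin R T) (hxy : x = y + p * H) :
    Algebra.adjoin R (T ∪ dividedPowerSet B x) ≤ Algebra.adjoin R (T ∪ dividedPowerSet B y) := by
  have hT : Algebra.adjoin R T ≤ Algebra.adjoin R (T ∪ dividedPowerSet B y) :=
    Algebra.adjoin_mono Set.subset_union_left
  rw [Algebra.adjoin_le_iff, Set.union_subset_iff, hxy]
  exact ⟨Set.subset_union_left.trans Algebra.subset_adjoin,
    dividedPowerSet_add_subset (Set.subset_union_right.trans Algebra.subset_adjoin)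
      (dividedPowerSet_natCast_mul_subset hp hunit (hT hH))⟩

theorem adjoin_union_dividedPowerSet_eq {p : ℕ} (hp : p.Prime)
    (hunit : ∀ n : ℕ, ¬ p ∣ n → IsUnit (n : R)) {T : Set A} {x y H : A}
    (hH : H ∈ Algebra.adjoin R T) (hxy : x = y + p * H) :
    Algebra.adjoin R (T ∪ dividedPowerSet B x) = Algebra.adjoin R (T ∪ dividedPowerSet B y) :=
  le_antisymm (adjoin_union_dividedPowerSet_le hp hunit hH hxy)
    (adjoin_union_dividedPowerSet_le hp hunit (neg_mem hH) (by rw [hxy]; ring))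

end DividedPowers

namespace Polynomial

theorem Monic.exists_eq_X_pow_add_C_mul {R : Type*} [CommRing R] {f : R[X]} {e : ℕ} {a : R}
    (hmonic : f.Monic) (hdeg : f.natDegree = e) (hcoeff : ∀ i < e, f.coeff i ∈ Ideal.span {a}) :
    ∃ h : R[X], f = X ^ e + C a * h := by
  suffices C a ∣ f - X ^ e from this.imp fun h hh => by rw [← hh]; ring
  rw [C_dvd_iff_dvd_coeff]
  intro i
  rw [coeff_sub, coeff_X_pow]
  rcases lt_trichotomy i e with hi | rfl | hi
  · rw [if_neg hi.ne, sub_zero, ← Ideal.mem_span_singleton]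
    exact hcoeff i hi
  · rw [if_pos rfl, ← hdeg, hmonic.coeff_natDegree, sub_self]
    exact dvd_zero a
  · rw [if_neg hi.ne', sub_zero, coeff_eq_zero_of_natDegree_lt (hdeg ▸ hi)]
    exact dvd_zero a

theorem map_algebraMap_mem_adjoin_X {R B : Type*} [CommRing R] [CommRing B] [Algebra R B]
    (p : R[X]) : p.map (algebraMap R B) ∈ Algebra.adjoin R {(X : B[X])} := by
  rw [← aeval_X_left_apply (p.map _), aeval_map_algebraMap]
  exact aeval_mem_adjoin_singleton R X

end Polynomial

open Polynomial

theorem stmt_11_general (k : Type*) [Field k] [Fact (Nat.Prime 2)] [CharP k 2]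
    (e : ℕ)
    (f : Polynomial (WittVector 2 k))
    (hmonic : f.Monic) (hdeg : f.natDegree = e)
    (heis : ∀ i < e, f.coeff i ∈ Ideal.span {(2 : WittVector 2 k)}) :
    Algebra.adjoin (WittVector 2 k)
        ({Polynomial.X} ∪
          {g : Polynomial (FractionRing (WittVector 2 k)) |
            ∃ i : ℕ, g = ((i.factorial : FractionRing (WittVector 2 k)))⁻¹ •
              (f.map (algebraMap (WittVector 2 k) (FractionRing (WittVector 2 k)))) ^ i}) =
      Algebra.adjoin (WittVector 2 k)
        ({Polynomial.X} ∪
          {g : Polynomial (FractionRing (WittVector 2 k)) |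
            ∃ i : ℕ, g = ((i.factorial : FractionRing (WittVector 2 k)))⁻¹ •
              Polynomial.X ^ (e * i)}) := by
  obtain ⟨h, rfl⟩ := hmonic.exists_eq_X_pow_add_C_mul hdeg heis
  simp_rw [pow_mul]
  exact adjoin_union_dividedPowerSet_eq Nat.prime_two
    (fun _ => WittVector.isUnit_natCast_of_not_dvd) (map_algebraMap_mem_adjoin_X h)
    (by simp [map_ofNat])

/-- Subsection 2.1 of the paper: inside `B[t]`, where `B` is the fraction field of
`W = W(k)`, the `W`-subalgebra generated by `t` and the divided powers `fᵉⁱ/i!` of a degree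
`e` Eisenstein polynomial `f` equals the `W`-subalgebra generated by `t` and the elements
`t^{e·i}/i!`; in particular it depends only on `e`. -/
theorem stmt_11 (k : Type*) [Field k] [Fact (Nat.Prime 2)] [CharP k 2] [PerfectRing k 2]
    (e : ℕ) (he : 1 ≤ e)
    (f : Polynomial (WittVector 2 k))
    (hmonic : f.Monic) (hdeg : f.natDegree = e)
    (heis : ∀ i < e, f.coeff i ∈ Ideal.span {(2 : WittVector 2 k)})
    (hconst : f.coeff 0 ∉ Ideal.span {(4 : WittVector 2 k)}) :
    Algebra.adjoin (WittVector 2 k)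
        ({Polynomial.X} ∪
          {g : Polynomial (FractionRing (WittVector 2 k)) |
            ∃ i : ℕ, g = ((i.factorial : FractionRing (WittVector 2 k)))⁻¹ •
              (f.map (algebraMap (WittVector 2 k) (FractionRing (WittVector 2 k)))) ^ i}) =
      Algebra.adjoin (WittVector 2 k)
        ({Polynomial.X} ∪
          {g : Polynomial (FractionRing (WittVector 2 k)) |
            ∃ i : ℕ, g = ((i.factorial : FractionRing (WittVector 2 k)))⁻¹ •
              Polynomial.X ^ (e * i)}) :=
  stmt_11_general k e f hmonic hdeg heis
end
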